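/- arXiv:2103.10925 — 5 statements merged into one kernel-verified Lean document; each statement's English description precedes it below -/
import Mathlib

section
/- If ℓ : [0,1] → ℝ is differentiable on (0,1) and exp(ℓ) is concave on [0,1], then for all x ∈ (0,1), -1/(1-x) ≤ ℓ'(x) ≤ 1/x. -/
open Set

theorem exp_concave_deriv_bounds
    (ℓ ℓ' : ℝ → ℝ)
    (hd : ∀ x ∈ Ioo (0:ℝ) 1, HasDerivAt ℓ (ℓ' x) x)
    (hconc : ConcaveOn ℝ (Icc (0:ℝ) 1) (fun x => Real.exp (ℓ x))) :
    ∀ x ∈ Ioo (0:ℝ) 1, -1 / (1 - x) ≤ ℓ' x ∧ ℓ' x ≤ 1 / x := by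
  intro x hx
  obtain ⟨hx0, hx1⟩ := hx
  have hxI : x ∈ Icc (0:ℝ) 1 := ⟨hx0.le, hx1.le⟩
  have hΦ : HasDerivAt (fun x => Real.exp (ℓ x)) (Real.exp (ℓ x) * ℓ' x) x :=
    (hd x ⟨hx0, hx1⟩).exp
  have hpos : 0 < Real.exp (ℓ x) := Real.exp_pos _
  have h0 : (0:ℝ) ∈ Icc (0:ℝ) 1 := ⟨le_refl 0, zero_le_one⟩
  have h1 : (1:ℝ) ∈ Icc (0:ℝ) 1 := ⟨zero_le_one, le_refl 1⟩
  constructor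
  · -- lower bound
    have hs := hconc.slope_le_of_hasDerivAt hxI h1 hx1 hΦ
    rw [slope_def_field] at hs
    have hs' : -Real.exp (ℓ x) / (1 - x) ≤ Real.exp (ℓ x) * ℓ' x := by
      refine le_trans ?_ hs
      apply div_le_div_of_nonneg_right _ (by linarith)
      have := (Real.exp_pos (ℓ 1)).le
      linarith
    rw [div_le_iff₀ (by linarith : (0:ℝ) < 1 - x)] at hs' ⊢
    nlinarith
  · -- upper bound
    have hs := hconc.le_slope_of_hasDerivAt h0 hxI hx0 hΦ
    rw [slope_def_field] at hs
    have hs' : Real.exp (ℓ x) * ℓ' x ≤ Real.exp (ℓ x) / x := by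
      refine le_trans hs ?_
      simp only [sub_zero]
      apply div_le_div_of_nonneg_right _ hx0.le
      have := (Real.exp_pos (ℓ 0)).le
      linarith
    rw [le_div_iff₀ hx0] at hs' ⊢
    nlinarith
end

section
/- Let ℓ : [0,1] → ℝ be differentiable with exp(ℓ) concave, ℓ(1/2) = 0, and ℓ' Lipschitz with constant β (β-smooth). Then |ℓ'(x)| ≤ √β for all x ∈ [0,1], and consequently |ℓ(x)| ≤ √β·|x - 1/2| ≤ √β/2 for all x ∈ [0,1]. -/
/-!
Fix `x` and `h` with `x, x + h ∈ [0, 1]` and write `c = ℓ' x`. The Lipschitz bound on `ℓ'` gives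
`ℓ (x + h) - ℓ x ≥ u := c h - β h² / 2`, and concavity of `exp ∘ ℓ` puts it below its tangent:
`exp (ℓ (x + h) - ℓ x) ≤ 1 + c h = 1 + u + β h² / 2`. When `u ≥ 0`, comparing with
`exp u ≥ 1 + u + u² / 2` gives `u² ≤ β h²`, that is `c h - β h² / 2 ≤ √β |h|`. Taking `h = ±t`
and letting `t → 0⁺` bounds `|ℓ'|` by `√β` on the interior, continuity of `ℓ'` extends this to
the endpoints, and the mean value inequality from `ℓ (1/2) = 0` bounds `ℓ`.
-/

open Set Filter Topology Real

section LipschitzDeriv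

variable {s : Set ℝ} {f f' : ℝ → ℝ} {β x y : ℝ}

theorem ConcaveOn.le_add_mul_sub_of_hasDerivWithinAt {g : ℝ → ℝ} {g' : ℝ}
    (hg : ConcaveOn ℝ s g) (hx : x ∈ s) (hy : y ∈ s) (hd : HasDerivWithinAt g g' s x) :
    g y ≤ g x + g' * (y - x) := by
  rcases lt_trichotomy x y with hxy | rfl | hyx
  · have := hg.slope_le_of_hasDerivWithinAt hx hy hxy hd
    rw [slope_def_field, div_le_iff₀ (sub_pos.2 hxy)] at this
    linarith
  · simp
  · have := hg.le_slope_of_hasDerivWithinAt hy hx hyx hd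
    rw [slope_def_field, le_div_iff₀ (sub_pos.2 hyx)] at this
    linarith

theorem Convex.taylor_lower_bound_of_lipschitz_deriv (hs : Convex ℝ s)
    (hf : ∀ x ∈ s, HasDerivWithinAt f (f' x) s x)
    (hf' : ∀ x ∈ s, ∀ y ∈ s, |f' x - f' y| ≤ β * |x - y|) (hx : x ∈ s) (hy : y ∈ s) :
    f x + f' x * (y - x) - β / 2 * (y - x) ^ 2 ≤ f y := by
  -- The derivative of `φ` has the sign of `z - x` by the Lipschitz bound, so `φ` is least at `x`.
  set φ : ℝ → ℝ := fun z => f z - f' x * z + β / 2 * (z - x) ^ 2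
  have hφ : ∀ z ∈ s, HasDerivWithinAt φ (f' z - f' x + β * (z - x)) s z := by
    intro z hz
    refine HasDerivWithinAt.congr_deriv (f := φ)
      (((hf z hz).sub ((hasDerivWithinAt_id z s).const_mul (f' x))).add
        ((((hasDerivWithinAt_id z s).sub_const x).pow 2).const_mul (β / 2))) ?_
    simp only [id]
    ring
  have hφ_cont : ContinuousOn φ s := fun z hz => (hφ z hz).continuousWithinAt
  have hφ_Icc : ∀ {a b}, Icc a b ⊆ s → ∀ z ∈ interior (Icc a b),
      HasDerivWithinAt φ (f' z - f' x + β * (z - x)) (interior (Icc a b)) z :=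
    fun hsub z hz => (hφ z (hsub (interior_subset hz))).mono (interior_subset.trans hsub)
  suffices φ x ≤ φ y by simp only [φ] at this; linarith
  rcases le_total x y with hxy | hyx
  · have hsub : Icc x y ⊆ s := hs.ordConnected.out hx hy
    refine monotoneOn_of_hasDerivWithinAt_nonneg (convex_Icc x y) (hφ_cont.mono hsub)
      (hφ_Icc hsub) ?_ (left_mem_Icc.2 hxy) (right_mem_Icc.2 hxy) hxy
    rw [interior_Icc]
    intro z hz
    have := hf' z (hsub (Ioo_subset_Icc_self hz)) x hx
    rw [abs_of_pos (sub_pos.2 hz.1)] at this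
    linarith [neg_abs_le (f' z - f' x)]
  · have hsub : Icc y x ⊆ s := hs.ordConnected.out hy hx
    refine antitoneOn_of_hasDerivWithinAt_nonpos (convex_Icc y x) (hφ_cont.mono hsub)
      (hφ_Icc hsub) ?_ (left_mem_Icc.2 hyx) (right_mem_Icc.2 hyx) hyx
    rw [interior_Icc]
    intro z hz
    have := hf' z (hsub (Ioo_subset_Icc_self hz)) x hx
    rw [abs_of_neg (sub_neg.2 hz.2)] at this
    linarith [le_abs_self (f' z - f' x)]

theorem Convex.deriv_mul_sub_le_sqrt_mul_abs_of_concaveOn_exp (hs : Convex ℝ s)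
    (hf : ∀ x ∈ s, HasDerivWithinAt f (f' x) s x)
    (hf' : ∀ x ∈ s, ∀ y ∈ s, |f' x - f' y| ≤ β * |x - y|)
    (hconc : ConcaveOn ℝ s (fun x => exp (f x))) (hx : x ∈ s) (hy : y ∈ s) :
    f' x * (y - x) - β / 2 * (y - x) ^ 2 ≤ √β * |y - x| := by
  set u := f' x * (y - x) - β / 2 * (y - x) ^ 2 with hu_def
  rcases le_total u 0 with hu | hu
  · exact hu.trans (by positivity)
  have htaylor : u ≤ f y - f x := by
    linarith [hs.taylor_lower_bound_of_lipschitz_deriv hf hf' hx hy, hu_def]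
  have htangent : exp (f y) ≤ exp (f x) * (1 + f' x * (y - x)) := by
    linarith [hconc.le_add_mul_sub_of_hasDerivWithinAt hx hy (hf x hx).exp]
  have hsq : 1 + u + u ^ 2 / 2 ≤ 1 + u + β / 2 * (y - x) ^ 2 :=
    calc 1 + u + u ^ 2 / 2 ≤ exp u := quadratic_le_exp_of_nonneg hu
      _ ≤ exp (f y - f x) := exp_le_exp.2 htaylor
      _ = exp (f y) / exp (f x) := exp_sub _ _
      _ ≤ 1 + f' x * (y - x) := by rw [div_le_iff₀ (exp_pos _)]; linarith
      _ = 1 + u + β / 2 * (y - x) ^ 2 := by ring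
  calc u ≤ |u| := le_abs_self u
    _ ≤ √(β * (y - x) ^ 2) := abs_le_sqrt (by linarith)
    _ = √β * |y - x| := by rw [sqrt_mul' _ (sq_nonneg _), sqrt_sq_eq_abs]

theorem Convex.abs_deriv_le_sqrt_of_concaveOn_exp (hs : Convex ℝ s)
    (hf : ∀ x ∈ s, HasDerivWithinAt f (f' x) s x)
    (hf' : ∀ x ∈ s, ∀ y ∈ s, |f' x - f' y| ≤ β * |x - y|)
    (hconc : ConcaveOn ℝ s (fun x => exp (f x))) (hx : x ∈ interior s) :
    |f' x| ≤ √β := by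
  have hshift : ∀ σ : ℝ, Tendsto (fun t => x + σ * t) (𝓝 0) (𝓝 x) := fun σ =>
    (by fun_prop : Continuous fun t : ℝ => x + σ * t).tendsto' 0 x (by simp)
  have hnear : ∀ᶠ t in 𝓝[>] (0 : ℝ), |f' x| ≤ √β + β / 2 * t := by
    have hs_nhds := mem_interior_iff_mem_nhds.1 hx
    filter_upwards [nhdsWithin_le_nhds (((hshift 1).eventually hs_nhds).and
      ((hshift (-1)).eventually hs_nhds)), self_mem_nhdsWithin]
      with t ⟨hplus, hminus⟩ (ht : 0 < t)
    have hright := hs.deriv_mul_sub_le_sqrt_mul_abs_of_concaveOn_exp hf hf' hconc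
      (interior_subset hx) hplus
    have hleft := hs.deriv_mul_sub_le_sqrt_mul_abs_of_concaveOn_exp hf hf' hconc
      (interior_subset hx) hminus
    simp only [add_sub_cancel_left, one_mul, neg_mul, abs_neg, abs_of_pos ht] at hright hleft
    rw [abs_le']
    constructor <;> nlinarith
  refine ge_of_tendsto (((by fun_prop : Continuous fun t : ℝ => √β + β / 2 * t).tendsto' 0 _
    (by simp)).mono_left nhdsWithin_le_nhds) hnear

end LipschitzDeriv

theorem beta_smooth_exp_concave_bounds_general
    (β : ℝ)
    (ℓ ℓ' : ℝ → ℝ)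
    (hd : ∀ x ∈ Icc (0:ℝ) 1, HasDerivWithinAt ℓ (ℓ' x) (Icc (0:ℝ) 1) x)
    (hℓ'cont : ContinuousOn ℓ' (Icc (0:ℝ) 1))
    (hconc : ConcaveOn ℝ (Icc (0:ℝ) 1) (fun x => Real.exp (ℓ x)))
    (hnorm : ℓ (1/2) = 0)
    (hlip : ∀ x ∈ Icc (0:ℝ) 1, ∀ y ∈ Icc (0:ℝ) 1, |ℓ' x - ℓ' y| ≤ β * |x - y|) :
    ∀ x ∈ Icc (0:ℝ) 1,
      |ℓ' x| ≤ Real.sqrt β ∧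
      |ℓ x| ≤ Real.sqrt β * |x - 1/2| ∧
      Real.sqrt β * |x - 1/2| ≤ Real.sqrt β / 2 := by
  have hderiv : ∀ x ∈ Icc (0:ℝ) 1, |ℓ' x| ≤ √β := by
    intro x hx
    have hcl : x ∈ closure (interior (Icc (0:ℝ) 1)) := by
      rwa [interior_Icc, closure_Ioo zero_ne_one]
    exact ContinuousWithinAt.closure_le hcl ((hℓ'cont x hx).abs.mono interior_subset)
      continuousWithinAt_const fun y hy =>
        (convex_Icc 0 1).abs_deriv_le_sqrt_of_concaveOn_exp hd hlip hconc hy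
  intro x hx
  have hmvt := (convex_Icc (0:ℝ) 1).norm_image_sub_le_of_norm_hasDerivWithin_le hd hderiv
    (by norm_num : (1/2 : ℝ) ∈ Icc (0:ℝ) 1) hx
  rw [hnorm, sub_zero] at hmvt
  have hhalf : |x - 1/2| ≤ 1/2 := abs_le.2 ⟨by linarith [hx.1], by linarith [hx.2]⟩
  exact ⟨hderiv x hx, hmvt, by linarith [mul_le_mul_of_nonneg_left hhalf (sqrt_nonneg β)]⟩

theorem beta_smooth_exp_concave_bounds
    (β : ℝ) (hβ : 0 < β)
    (ℓ ℓ' : ℝ → ℝ)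
    (hd : ∀ x ∈ Icc (0:ℝ) 1, HasDerivWithinAt ℓ (ℓ' x) (Icc (0:ℝ) 1) x)
    (hℓ'cont : ContinuousOn ℓ' (Icc (0:ℝ) 1))
    (hconc : ConcaveOn ℝ (Icc (0:ℝ) 1) (fun x => Real.exp (ℓ x)))
    (hnorm : ℓ (1/2) = 0)
    (hlip : ∀ x ∈ Icc (0:ℝ) 1, ∀ y ∈ Icc (0:ℝ) 1, |ℓ' x - ℓ' y| ≤ β * |x - y|) :
    ∀ x ∈ Icc (0:ℝ) 1,
      |ℓ' x| ≤ Real.sqrt β ∧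
      |ℓ x| ≤ Real.sqrt β * |x - 1/2| ∧
      Real.sqrt β * |x - 1/2| ≤ Real.sqrt β / 2 :=
  beta_smooth_exp_concave_bounds_general β ℓ ℓ' hd hℓ'cont hconc hnorm hlip
end

section
/- Let ℓ : [0,1] → ℝ be differentiable with exp(ℓ) concave, and suppose the map x ↦ x·ℓ'(x) is non-decreasing on (0,1). Define the portfolio map πᵢ(p) = pᵢ·(1 + (1/n)ℓ'(pᵢ) - (1/n)Σⱼ pⱼℓ'(pⱼ)) on Δₙ. Then for any p ∈ Δₙ, pᵢ ≥ pⱼ implies πᵢ(p) ≥ πⱼ(p). -/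
open Set

lemma key_xl_le_one (ℓ ℓ' : ℝ → ℝ)
    (hd : ∀ x ∈ Ioo (0:ℝ) 1, HasDerivAt ℓ (ℓ' x) x)
    (hconc : ConcaveOn ℝ (Icc (0:ℝ) 1) (fun x => Real.exp (ℓ x)))
    {x : ℝ} (hx : x ∈ Ioo (0:ℝ) 1) : x * ℓ' x ≤ 1 := by
  have hx0 := hx.1
  have hg : HasDerivAt (fun x => Real.exp (ℓ x)) (ℓ' x * Real.exp (ℓ x)) x := by
    simpa [mul_comm] using (hd x hx).exp
  have hs := hconc.le_slope_of_hasDerivAt (x := 0) (y := x)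
    (by constructor <;> norm_num) ⟨le_of_lt hx.1, le_of_lt hx.2⟩ hx0 hg
  rw [slope_def_field] at hs
  have hsl : ℓ' x * Real.exp (ℓ x) ≤ (Real.exp (ℓ x) - Real.exp (ℓ 0)) / x := by
    simpa [sub_zero] using hs
  have h1 : x * (ℓ' x * Real.exp (ℓ x)) ≤ Real.exp (ℓ x) - Real.exp (ℓ 0) := by
    rw [div_eq_inv_mul] at hsl
    calc x * (ℓ' x * Real.exp (ℓ x)) ≤ x * (x⁻¹ * (Real.exp (ℓ x) - Real.exp (ℓ 0))) := by
          exact mul_le_mul_of_nonneg_left hsl (le_of_lt hx0)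
      _ = Real.exp (ℓ x) - Real.exp (ℓ 0) := by field_simp
  have he : 0 < Real.exp (ℓ x) := Real.exp_pos _
  have he0 : 0 < Real.exp (ℓ 0) := Real.exp_pos _
  nlinarith [h1, he, he0]

theorem portfolio_weight_monotone
    (n : ℕ) (hn : 2 ≤ n)
    (ℓ ℓ' : ℝ → ℝ)
    (hd : ∀ x ∈ Ioo (0:ℝ) 1, HasDerivAt ℓ (ℓ' x) x)
    (hconc : ConcaveOn ℝ (Icc (0:ℝ) 1) (fun x => Real.exp (ℓ x)))
    (hmono : ∀ x ∈ Ioo (0:ℝ) 1, ∀ y ∈ Ioo (0:ℝ) 1, x ≤ y → x * ℓ' x ≤ y * ℓ' y)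
    (p : Fin n → ℝ) (hp : ∀ i, p i ∈ Ioo (0:ℝ) 1) (hsum : ∑ i, p i = 1)
    (i j : Fin n) (hij : p i ≥ p j) :
    p i * (1 + (1/(n:ℝ)) * ℓ' (p i) - (1/(n:ℝ)) * ∑ k, p k * ℓ' (p k)) ≥
    p j * (1 + (1/(n:ℝ)) * ℓ' (p j) - (1/(n:ℝ)) * ∑ k, p k * ℓ' (p k)) := by
  have hn0 : (0:ℝ) < n := by positivity
  have hS : (∑ k, p k * ℓ' (p k)) ≤ n := by
    calc (∑ k, p k * ℓ' (p k)) ≤ ∑ _k : Fin n, (1:ℝ) :=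
          Finset.sum_le_sum fun k _ => key_xl_le_one ℓ ℓ' hd hconc (hp k)
      _ = n := by simp
  have hterm : p j * ℓ' (p j) ≤ p i * ℓ' (p i) :=
    hmono _ (hp j) _ (hp i) hij
  have h1 : 1 - (1/(n:ℝ)) * ∑ k, p k * ℓ' (p k) ≥ 0 := by
    rw [ge_iff_le, sub_nonneg]
    rw [one_div, inv_mul_le_iff₀ hn0]
    simpa using hS
  have hninv : (0:ℝ) ≤ 1/(n:ℝ) := by positivity
  nlinarith [mul_le_mul_of_nonneg_right (sub_nonneg.mpr hij) h1,
    mul_le_mul_of_nonneg_left hterm hninv]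
end

section
/- For any x, y, x', y' in the open unit simplex Δₙ, |log((x·y)/(x'·y'))| ≤ d_H(x,x') + d_H(y,y'), where d_H(p,q) = log(max(maxᵢ pᵢ/qᵢ, maxⱼ qⱼ/pⱼ)) is the Hilbert projective metric and x·y denotes the Euclidean inner product. -/
open Set

noncomputable def hilbertDist {n : ℕ} (p q : Fin n → ℝ) : ℝ :=
  Real.log (max (⨆ i, p i / q i) (⨆ i, q i / p i))

private lemma sup_ratio_pos {n : ℕ} (hn : 0 < n) (p q : Fin n → ℝ)
    (hp : ∀ i, 0 < p i) (hq : ∀ i, 0 < q i) : 0 < ⨆ i, p i / q i := by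
  haveI : Nonempty (Fin n) := ⟨⟨0, hn⟩⟩
  have h := le_ciSup (Set.Finite.bddAbove (Set.finite_range _)) (Classical.arbitrary (Fin n))
    (f := fun i => p i / q i)
  exact lt_of_lt_of_le (div_pos (hp _) (hq _)) h

private lemma aux_log_bound {n : ℕ} (hn : 0 < n) (x y x' y' : Fin n → ℝ)
    (hx : ∀ i, 0 < x i) (hy : ∀ i, 0 < y i)
    (hx' : ∀ i, 0 < x' i) (hy' : ∀ i, 0 < y' i) :
    Real.log ((∑ i, x i * y i) / (∑ i, x' i * y' i)) ≤
      Real.log (⨆ i, x i / x' i) + Real.log (⨆ i, y i / y' i) := by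
  haveI : Nonempty (Fin n) := ⟨⟨0, hn⟩⟩
  set Mx := ⨆ i, x i / x' i with hMx
  set My := ⨆ i, y i / y' i with hMy
  have hMxpos : 0 < Mx := sup_ratio_pos hn x x' hx hx'
  have hMypos : 0 < My := sup_ratio_pos hn y y' hy hy'
  have hS : 0 < ∑ i, x i * y i :=
    Finset.sum_pos (fun i _ => mul_pos (hx i) (hy i)) Finset.univ_nonempty
  have hS' : 0 < ∑ i, x' i * y' i :=
    Finset.sum_pos (fun i _ => mul_pos (hx' i) (hy' i)) Finset.univ_nonempty
  have key : ∑ i, x i * y i ≤ Mx * My * ∑ i, x' i * y' i := by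
    rw [Finset.mul_sum]
    apply Finset.sum_le_sum
    intro i _
    have h1 : x i ≤ Mx * x' i := by
      have := le_ciSup (Set.Finite.bddAbove (Set.finite_range _)) i (f := fun i => x i / x' i)
      rw [div_le_iff₀ (hx' i)] at this
      simpa [hMx] using this
    have h2 : y i ≤ My * y' i := by
      have := le_ciSup (Set.Finite.bddAbove (Set.finite_range _)) i (f := fun i => y i / y' i)
      rw [div_le_iff₀ (hy' i)] at this
      simpa [hMy] using this
    calc x i * y i ≤ (Mx * x' i) * (My * y' i) :=
          mul_le_mul h1 h2 (hy i).le (le_trans (hx i).le h1)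
      _ = Mx * My * (x' i * y' i) := by ring
  rw [Real.log_div hS.ne' hS'.ne']
  have := Real.log_le_log hS key
  rw [Real.log_mul (mul_pos hMxpos hMypos).ne' hS'.ne',
    Real.log_mul hMxpos.ne' hMypos.ne'] at this
  linarith

theorem log_inner_product_hilbert_bound
    (n : ℕ) (hn : 2 ≤ n)
    (x y x' y' : Fin n → ℝ)
    (hx : ∀ i, x i ∈ Ioo (0:ℝ) 1) (hxs : ∑ i, x i = 1)
    (hy : ∀ i, y i ∈ Ioo (0:ℝ) 1) (hys : ∑ i, y i = 1)
    (hx' : ∀ i, x' i ∈ Ioo (0:ℝ) 1) (hxs' : ∑ i, x' i = 1)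
    (hy' : ∀ i, y' i ∈ Ioo (0:ℝ) 1) (hys' : ∑ i, y' i = 1) :
    |Real.log ((∑ i, x i * y i) / (∑ i, x' i * y' i))| ≤
      hilbertDist x x' + hilbertDist y y' := by
  have hn0 : 0 < n := by omega
  have px : ∀ i, 0 < x i := fun i => (hx i).1
  have py : ∀ i, 0 < y i := fun i => (hy i).1
  have px' : ∀ i, 0 < x' i := fun i => (hx' i).1
  have py' : ∀ i, 0 < y' i := fun i => (hy' i).1
  have hSx1 : 0 < ⨆ i, x i / x' i := sup_ratio_pos hn0 x x' px px'
  have hSx2 : 0 < ⨆ i, x' i / x i := sup_ratio_pos hn0 x' x px' px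
  have hSy1 : 0 < ⨆ i, y i / y' i := sup_ratio_pos hn0 y y' py py'
  have hSy2 : 0 < ⨆ i, y' i / y i := sup_ratio_pos hn0 y' y py' py
  have hdx1 : Real.log (⨆ i, x i / x' i) ≤ hilbertDist x x' :=
    Real.log_le_log hSx1 (le_max_left _ _)
  have hdx2 : Real.log (⨆ i, x' i / x i) ≤ hilbertDist x x' :=
    Real.log_le_log hSx2 (le_max_right _ _)
  have hdy1 : Real.log (⨆ i, y i / y' i) ≤ hilbertDist y y' :=
    Real.log_le_log hSy1 (le_max_left _ _)
  have hdy2 : Real.log (⨆ i, y' i / y i) ≤ hilbertDist y y' :=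
    Real.log_le_log hSy2 (le_max_right _ _)
  haveI : Nonempty (Fin n) := ⟨⟨0, hn0⟩⟩
  have hS : 0 < ∑ i, x i * y i :=
    Finset.sum_pos (fun i _ => mul_pos (px i) (py i)) Finset.univ_nonempty
  have hS' : 0 < ∑ i, x' i * y' i :=
    Finset.sum_pos (fun i _ => mul_pos (px' i) (py' i)) Finset.univ_nonempty
  have h1 := aux_log_bound hn0 x y x' y' px py px' py'
  have h2 := aux_log_bound hn0 x' y' x y px' py' px py
  rw [abs_le]
  constructor
  · have : Real.log ((∑ i, x i * y i) / (∑ i, x' i * y' i)) =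
        -Real.log ((∑ i, x' i * y' i) / (∑ i, x i * y i)) := by
      rw [Real.log_div hS.ne' hS'.ne', Real.log_div hS'.ne' hS.ne']; ring
    rw [this]
    linarith
  · linarith
end

section
/- Let (ℓᵢ)ᵢ₌₁^d be real numbers on a partition 0 = x₁ < ⋯ < x_d = 1 satisfying: (a) the discrete exponential concavity constraint (e^{ℓ₂}-e^{ℓ₁})/(x₂-x₁) ≥ ⋯ ≥ (e^{ℓ_d}-e^{ℓ_{d-1}})/(x_d-x_{d-1}); (b) the endpoint slope constraints ((ℓ₂-ℓ₁)/(x₂-x₁))² ≤ β and ((ℓ_d-ℓ_{d-1})/(x_d-x_{d-1}))² ≤ β; and (c) ℓ_k = 0 for some index k with x_k = 1/2. Then |ℓ_{i+1} - ℓᵢ| ≤ √β·(x_{i+1} - xᵢ) for all i, and -√β/2 ≤ ℓᵢ ≤ log 2 for all i. -/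
/-!
Constraint (a) says that `f = exp ∘ L` is discretely concave: its cell slopes are antitone, whikh
gives the three-point inequality for any three grid points. If `L` rose by more than `√β` per unit
length on some cell, `f` would be increasing up to that cell, so its slope there, at least
`f · ΔL / Δx`, would exceed the slope on the first cell, whikh is at most `√β · e^{ℓ₂}`; steep falls
are excluded in the same way by the last cell. Telescoping these step bounds from the point
`x_k = 1/2`, where `L` vanishes, gives `L ≥ -√β / 2`, and concavity of the positive function `f`,
equal to `1` at the midpoint of `[0, 1]`, gives `f ≤ 2`.
-/

open Set Real

section NatMonotone

variable {β : Type*} [Preorder β] {g : ℕ → β} {s : Set ℕ}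

lemma monotoneOn_nat_of_le_succ (hs : s.OrdConnected)
    (hg : ∀ n, n ∈ s → n + 1 ∈ s → g n ≤ g (n + 1)) : MonotoneOn g s :=
  monotoneOn_of_le_succ hs fun n _ hn hn1 => by
    simpa using hg n hn (by simpa using hn1)

lemma antitoneOn_nat_of_succ_le (hs : s.OrdConnected)
    (hg : ∀ n, n ∈ s → n + 1 ∈ s → g (n + 1) ≤ g n) : AntitoneOn g s :=
  monotoneOn_nat_of_le_succ (β := βᵒᵈ) hs hg

end NatMonotone

lemma exp_mul_sub_le_exp_sub_exp (a b : ℝ) : exp a * (b - a) ≤ exp b - exp a := by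
  have h := mul_le_mul_of_nonneg_left (add_one_le_exp (b - a)) (exp_pos a).le
  rw [← exp_add, add_sub_cancel] at h
  linarith

lemma exp_sub_exp_le_exp_mul_sub (a b : ℝ) : exp b - exp a ≤ exp b * (b - a) := by
  linarith [exp_mul_sub_le_exp_sub_exp b a]

lemma abs_le_sqrt_mul_of_div_sq_le {a h β : ℝ} (hh : 0 < h) (hab : (a / h) ^ 2 ≤ β) :
    |a| ≤ √β * h := by
  have := abs_le_sqrt hab
  rwa [abs_div, abs_of_pos hh, div_le_iff₀ hh] at this

noncomputable def gridSlope (x f : ℕ → ℝ) (i : ℕ) : ℝ :=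
  (f (i + 1) - f i) / (x (i + 1) - x i)

section GridSlope

variable {x f L : ℕ → ℝ} {N a b c i k : ℕ}

lemma sub_eq_gridSlope_mul (h : x i < x (i + 1)) :
    f (i + 1) - f i = gridSlope x f i * (x (i + 1) - x i) := by
  rw [gridSlope, div_mul_cancel₀ _ (sub_pos.2 h).ne']

variable (hx : StrictMonoOn x (Iic N))
include hx

lemma sub_le_gridSlope_mul_sub (hf : AntitoneOn (gridSlope x f) (Iio N))
    (hab : a ≤ b) (hb : b ≤ N) : f b - f a ≤ gridSlope x f a * (x b - x a) := by
  have hmono : MonotoneOn (fun j => gridSlope x f a * x j - f j) (Icc a N) := by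
    refine monotoneOn_nat_of_le_succ ordConnected_Icc fun j hj hj1 => ?_
    have hΔ := hx hj.2 hj1.2 (lt_add_one j)
    have hs : gridSlope x f j ≤ gridSlope x f a :=
      hf (hj.1.trans_lt hj1.2) hj1.2 hj.1
    have := mul_le_mul_of_nonneg_right hs (sub_pos.2 hΔ).le
    linarith [sub_eq_gridSlope_mul (f := f) hΔ]
  have := hmono ⟨le_rfl, hab.trans hb⟩ ⟨hab, hb⟩ hab
  linarith

lemma gridSlope_mul_sub_le_sub (hf : AntitoneOn (gridSlope x f) (Iio N))
    (hab : a ≤ b) (hb : b < N) : gridSlope x f b * (x b - x a) ≤ f b - f a := by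
  have hmono : MonotoneOn (fun j => f j - gridSlope x f b * x j) (Icc a b) := by
    refine monotoneOn_nat_of_le_succ ordConnected_Icc fun j hj hj1 => ?_
    have hΔ := hx (hj.2.trans hb.le) (hj1.2.trans hb.le) (lt_add_one j)
    have hs : gridSlope x f b ≤ gridSlope x f j := hf (hj.2.trans_lt hb) hb hj.2
    have := mul_le_mul_of_nonneg_right hs (sub_pos.2 hΔ).le
    linarith [sub_eq_gridSlope_mul (f := f) hΔ]
  have := hmono ⟨le_rfl, hab⟩ ⟨hab, le_rfl⟩ hab
  linarith

lemma sub_mul_sub_le_sub_mul_sub (hf : AntitoneOn (gridSlope x f) (Iio N))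
    (hab : a ≤ b) (hbc : b ≤ c) (hc : c ≤ N) :
    (f c - f b) * (x b - x a) ≤ (f b - f a) * (x c - x b) := by
  obtain rfl | hbN := (hbc.trans hc).eq_or_lt
  · obtain rfl := le_antisymm hc hbc
    simp
  have hxab : 0 ≤ x b - x a := sub_nonneg.2 (hx.monotoneOn (hab.trans hbN.le) hbN.le hab)
  have hxbc : 0 ≤ x c - x b := sub_nonneg.2 (hx.monotoneOn hbN.le hc hbc)
  calc (f c - f b) * (x b - x a)
      ≤ gridSlope x f b * (x c - x b) * (x b - x a) :=
        mul_le_mul_of_nonneg_right (sub_le_gridSlope_mul_sub hx hf hbc hc) hxab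
    _ = gridSlope x f b * (x b - x a) * (x c - x b) := by ring
    _ ≤ (f b - f a) * (x c - x b) :=
        mul_le_mul_of_nonneg_right (gridSlope_mul_sub_le_sub hx hf hab hbN) hxbc

lemma le_two_mul_of_midpoint (hf : AntitoneOn (gridSlope x f) (Iio N))
    (hpos : ∀ j ≤ N, 0 ≤ f j) (hk : k ≤ N) (hmid : x k - x 0 = x N - x k) (hi : i ≤ N) :
    f i ≤ 2 * f k := by
  have hxmono := hx.monotoneOn
  have hx0i : x 0 ≤ x i := hxmono (Nat.zero_le N) hi (Nat.zero_le i)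
  have hxiN : x i ≤ x N := hxmono hi self_mem_Iic hi
  rcases lt_trichotomy i k with hik | rfl | hki
  · have hh : 0 < x k - x 0 := sub_pos.2 (hx0i.trans_lt (hx hi hk hik))
    have h3 := sub_mul_sub_le_sub_mul_sub hx hf hik.le hk le_rfl
    have hfN := mul_nonneg (hpos N le_rfl) (sub_nonneg.2 (hxmono hi hk hik.le))
    have hfc := mul_le_mul_of_nonneg_left
      (show x k - x i ≤ x k - x 0 by linarith) (hpos k hk)
    rw [← hmid] at h3
    exact le_of_mul_le_mul_right (by linarith) hh
  · linarith [hpos i hi]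
  · have hh : 0 < x N - x k := sub_pos.2 ((hx hk hi hki).trans_le hxiN)
    have h3 := sub_mul_sub_le_sub_mul_sub hx hf (Nat.zero_le k) hki.le hi
    have hf0 := mul_nonneg (hpos 0 (Nat.zero_le N)) (sub_nonneg.2 (hxmono hk hi hki.le))
    have hfc := mul_le_mul_of_nonneg_left
      (show x i - x k ≤ x N - x k by linarith) (hpos k hk)
    rw [hmid] at h3
    exact le_of_mul_le_mul_right (by linarith) hh

lemma step_le_of_first_step_le {r : ℝ} (hL : AntitoneOn (gridSlope x fun j => exp (L j)) (Iio N))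
    (hr : 0 ≤ r) (h0 : L 1 - L 0 ≤ r * (x 1 - x 0)) (hi : i < N) :
    L (i + 1) - L i ≤ r * (x (i + 1) - x i) := by
  have hΔ : 0 < x (i + 1) - x i := sub_pos.2 (hx hi.le hi (lt_add_one i))
  rcases le_or_gt (L (i + 1)) (L i) with hfall | hrise
  · linarith [mul_nonneg hr hΔ.le]
  cases i with
  | zero => exact h0
  | succ j =>
    have hΔ0 : 0 < x 1 - x 0 := sub_pos.2 (hx (Nat.zero_le N) (show 1 ≤ N by omega) zero_lt_one)
    -- `exp ∘ L` rises on the cell `j + 1`, so by concavity it rises from `1` to `j + 1`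
    have he1 : exp (L 1) ≤ exp (L (j + 1)) := by
      have h3 := sub_mul_sub_le_sub_mul_sub hx hL (a := 1) (b := j + 1) (c := j + 1 + 1)
        (by omega) (by omega) hi
      have hx1 : 0 ≤ x (j + 1) - x 1 := sub_nonneg.2 (hx.monotoneOn (show 1 ≤ N by omega) hi.le (by omega))
      have := mul_nonneg (sub_pos.2 (exp_lt_exp.2 hrise)).le hx1
      exact sub_nonneg.1 ((mul_nonneg_iff_of_pos_right hΔ).1 (this.trans h3))
    have hs0 : gridSlope x (fun j => exp (L j)) 0 ≤ r * exp (L 1) := by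
      change (exp (L 1) - exp (L 0)) / (x 1 - x 0) ≤ _
      rw [div_le_iff₀ hΔ0]
      nlinarith [exp_sub_exp_le_exp_mul_sub (L 0) (L 1), mul_le_mul_of_nonneg_left h0 (exp_pos (L 1)).le]
    have key : exp (L (j + 1)) * (L (j + 1 + 1) - L (j + 1)) ≤
        exp (L (j + 1)) * (r * (x (j + 1 + 1) - x (j + 1))) := calc
      _ ≤ exp (L (j + 1 + 1)) - exp (L (j + 1)) := exp_mul_sub_le_exp_sub_exp _ _
      _ = gridSlope x (fun j => exp (L j)) (j + 1) * (x (j + 1 + 1) - x (j + 1)) :=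
        sub_eq_gridSlope_mul (f := fun j => exp (L j)) (sub_pos.1 hΔ)
      _ ≤ gridSlope x (fun j => exp (L j)) 0 * (x (j + 1 + 1) - x (j + 1)) := by
        gcongr
        exact hL (show 0 < N by omega) hi (Nat.zero_le _)
      _ ≤ r * exp (L 1) * (x (j + 1 + 1) - x (j + 1)) := by gcongr
      _ ≤ r * exp (L (j + 1)) * (x (j + 1 + 1) - x (j + 1)) := by gcongr
      _ = _ := by ring
    exact le_of_mul_le_mul_left key (exp_pos _)

lemma neg_mul_le_step_of_last_step {r : ℝ}
    (hL : AntitoneOn (gridSlope x fun j => exp (L j)) (Iio N)) (hr : 0 ≤ r)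
    (hN : -(r * (x N - x (N - 1))) ≤ L N - L (N - 1)) (hi : i < N) :
    -(r * (x (i + 1) - x i)) ≤ L (i + 1) - L i := by
  have hΔ : 0 < x (i + 1) - x i := sub_pos.2 (hx hi.le hi (lt_add_one i))
  rcases le_or_gt (L i) (L (i + 1)) with hrise | hfall
  · linarith [mul_nonneg hr hΔ.le]
  obtain ⟨m, rfl⟩ : ∃ m, N = m + 1 := ⟨N - 1, by omega⟩
  rw [Nat.add_sub_cancel] at hN
  obtain rfl | him : i = m ∨ i < m := by omega
  · exact hN
  have hΔm : 0 < x (m + 1) - x m := sub_pos.2 (hx (show m ≤ m + 1 by omega) self_mem_Iic (lt_add_one m))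
  -- `exp ∘ L` falls on the cell `i`, so by concavity it falls from `i + 1` to `m`
  have hem : exp (L m) ≤ exp (L (i + 1)) := by
    have h3 := sub_mul_sub_le_sub_mul_sub hx hL (a := i) (b := i + 1) (c := m)
      (by omega) him (by omega)
    have hxm : 0 ≤ x m - x (i + 1) :=
      sub_nonneg.2 (hx.monotoneOn (show i + 1 ≤ m + 1 by omega) (show m ≤ m + 1 by omega) him)
    have := mul_nonpos_of_nonpos_of_nonneg (sub_neg.2 (exp_lt_exp.2 hfall)).le hxm
    exact sub_nonpos.1 (nonpos_of_mul_nonpos_left (h3.trans this) hΔ)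
  have hsm : -(r * exp (L m)) ≤ gridSlope x (fun j => exp (L j)) m := by
    change _ ≤ (exp (L (m + 1)) - exp (L m)) / (x (m + 1) - x m)
    rw [le_div_iff₀ hΔm]
    nlinarith [exp_mul_sub_le_exp_sub_exp (L m) (L (m + 1)),
      mul_le_mul_of_nonneg_left hN (exp_pos (L m)).le]
  have key : exp (L (i + 1)) * -(r * (x (i + 1) - x i)) ≤
      exp (L (i + 1)) * (L (i + 1) - L i) := calc
    _ = -(r * exp (L (i + 1))) * (x (i + 1) - x i) := by ring
    _ ≤ -(r * exp (L m)) * (x (i + 1) - x i) := by gcongr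
    _ ≤ gridSlope x (fun j => exp (L j)) m * (x (i + 1) - x i) := by gcongr
    _ ≤ gridSlope x (fun j => exp (L j)) i * (x (i + 1) - x i) := by
      gcongr
      exact hL hi (lt_add_one m) him.le
    _ = exp (L (i + 1)) - exp (L i) :=
      (sub_eq_gridSlope_mul (f := fun j => exp (L j)) (sub_pos.1 hΔ)).symm
    _ ≤ exp (L (i + 1)) * (L (i + 1) - L i) := exp_sub_exp_le_exp_mul_sub _ _
  exact le_of_mul_le_mul_left key (exp_pos _)

end GridSlope

section Telescoping

variable {x L : ℕ → ℝ} {N a b i k : ℕ} {r : ℝ}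

lemma abs_sub_le_mul_sub_of_abs_step_le
    (hstep : ∀ j < N, |L (j + 1) - L j| ≤ r * (x (j + 1) - x j)) (hab : a ≤ b) (hb : b ≤ N) :
    |L b - L a| ≤ r * (x b - x a) := by
  have hup : MonotoneOn (fun j => r * x j - L j) (Iic N) :=
    monotoneOn_nat_of_le_succ ordConnected_Iic fun j _ hj => by
      linarith [(abs_le.1 (hstep j hj)).2]
  have hdown : MonotoneOn (fun j => r * x j + L j) (Iic N) :=
    monotoneOn_nat_of_le_succ ordConnected_Iic fun j _ hj => by
      linarith [(abs_le.1 (hstep j hj)).1]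
  have h₁ := hup (hab.trans hb) hb hab
  have h₂ := hdown (hab.trans hb) hb hab
  exact abs_le.2 ⟨by linarith, by linarith⟩

lemma abs_sub_le_of_midpoint (hx : MonotoneOn x (Iic N))
    (hstep : ∀ j < N, |L (j + 1) - L j| ≤ r * (x (j + 1) - x j)) (hr : 0 ≤ r) (hk : k ≤ N)
    (hmid : x k - x 0 = x N - x k) (hi : i ≤ N) : |L i - L k| ≤ r * (x k - x 0) := by
  rcases le_total i k with hik | hki
  · rw [abs_sub_comm]
    calc |L k - L i| ≤ r * (x k - x i) := abs_sub_le_mul_sub_of_abs_step_le hstep hik hk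
      _ ≤ r * (x k - x 0) := by gcongr; exact hx (Nat.zero_le N) hi (Nat.zero_le i)
  · calc |L i - L k| ≤ r * (x i - x k) := abs_sub_le_mul_sub_of_abs_step_le hstep hki hi
      _ ≤ r * (x k - x 0) := by rw [hmid]; gcongr; exact hx hi self_mem_Iic hi

end Telescoping

theorem discrete_constraint_bounds_general
    (β : ℝ)
    (d : ℕ)
    (x L : ℕ → ℝ)
    (hx0 : x 0 = 0) (hxd : x (d-1) = 1)
    (hmono : ∀ i j, i < j → j ≤ d - 1 → x i < x j)
    (ha : ∀ i, i + 2 ≤ d - 1 →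
      (Real.exp (L (i+2)) - Real.exp (L (i+1))) / (x (i+2) - x (i+1)) ≤
      (Real.exp (L (i+1)) - Real.exp (L i)) / (x (i+1) - x i))
    (hb1 : ((L 1 - L 0) / (x 1 - x 0))^2 ≤ β)
    (hb2 : ((L (d-1) - L (d-2)) / (x (d-1) - x (d-2)))^2 ≤ β)
    (hc : ∃ k ≤ d - 1, x k = 1/2 ∧ L k = 0) :
    (∀ i, i + 1 ≤ d - 1 → |L (i+1) - L i| ≤ Real.sqrt β * (x (i+1) - x i)) ∧
    (∀ i ≤ d - 1, -Real.sqrt β / 2 ≤ L i ∧ L i ≤ Real.log 2) := by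
  obtain ⟨k, hk, hxk, hLk⟩ := hc
  have hx : StrictMonoOn x (Iic (d - 1)) := fun i _ j hj hij => hmono i j hij hj
  have hL : AntitoneOn (gridSlope x fun i => exp (L i)) (Iio (d - 1)) :=
    antitoneOn_nat_of_succ_le ordConnected_Iio fun i _ hi => ha i hi
  have hd : 0 < d - 1 := Nat.pos_of_ne_zero fun h => by simp [h, hx0] at hxd
  have hfirst : |L 1 - L 0| ≤ √β * (x 1 - x 0) :=
    abs_le_sqrt_mul_of_div_sq_le (sub_pos.2 (hx (Nat.zero_le _) hd zero_lt_one)) hb1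
  rw [show d - 2 = d - 1 - 1 by omega] at hb2
  have hlast : |L (d - 1) - L (d - 1 - 1)| ≤ √β * (x (d - 1) - x (d - 1 - 1)) :=
    abs_le_sqrt_mul_of_div_sq_le (sub_pos.2 (hx (by simp) self_mem_Iic (by omega))) hb2
  have hstep : ∀ i < d - 1, |L (i + 1) - L i| ≤ √β * (x (i + 1) - x i) := fun i hi =>
    abs_le.2 ⟨neg_mul_le_step_of_last_step hx hL (sqrt_nonneg β) (abs_le.1 hlast).1 hi,
      step_le_of_first_step_le hx hL (sqrt_nonneg β) (abs_le.1 hfirst).2 hi⟩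
  have hmid : x k - x 0 = x (d - 1) - x k := by rw [hxk, hx0, hxd]; norm_num
  refine ⟨hstep, fun i hi => ⟨?_, ?_⟩⟩
  · have := abs_sub_le_of_midpoint hx.monotoneOn hstep (sqrt_nonneg β) hk hmid hi
    rw [hLk, sub_zero, hxk, hx0] at this
    linarith [neg_abs_le (L i)]
  · have := le_two_mul_of_midpoint hx hL (fun j _ => (exp_pos (L j)).le) hk hmid hi
    rw [hLk, exp_zero] at this
    exact (le_log_iff_exp_le two_pos).2 (by linarith)

theorem discrete_constraint_bounds
    (β : ℝ) (hβ : 0 < β)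
    (d : ℕ) (hd : 2 ≤ d)
    (x L : ℕ → ℝ)
    (hx0 : x 0 = 0) (hxd : x (d-1) = 1)
    (hmono : ∀ i j, i < j → j ≤ d - 1 → x i < x j)
    (ha : ∀ i, i + 2 ≤ d - 1 →
      (Real.exp (L (i+2)) - Real.exp (L (i+1))) / (x (i+2) - x (i+1)) ≤
      (Real.exp (L (i+1)) - Real.exp (L i)) / (x (i+1) - x i))
    (hb1 : ((L 1 - L 0) / (x 1 - x 0))^2 ≤ β)
    (hb2 : ((L (d-1) - L (d-2)) / (x (d-1) - x (d-2)))^2 ≤ β)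
    (hc : ∃ k ≤ d - 1, x k = 1/2 ∧ L k = 0) :
    (∀ i, i + 1 ≤ d - 1 → |L (i+1) - L i| ≤ Real.sqrt β * (x (i+1) - x i)) ∧
    (∀ i ≤ d - 1, -Real.sqrt β / 2 ≤ L i ∧ L i ≤ Real.log 2) :=
  discrete_constraint_bounds_general β d x L hx0 hxd hmono ha hb1 hb2 hc
end
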